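/- arXiv:2012.02476 — 2 statements merged into one kernel-verified Lean document; each statement's English description precedes it below -/
import Mathlib

section
/- Let S be a finite nonempty type, γ ∈ [0,1), R_max ≥ 0, r : S → ℝ with |r s| ≤ R_max for all s, μ : PMF S, and let P, P' : S → PMF S be two transition kernels. If TV(P s, P' s) ≤ α for every s ∈ S, then |J(μ, P) − J(μ, P')| ≤ 2·γ·R_max·α / (1−γ)². -/
open scoped ENNReal

/-- The `t`-fold bind iterate of an initial distribution `μ` under transition kernel `P`:
`μ_0 = μ`, `μ_{t+1} = μ_t.bind P`. -/
noncomputable def stepDist {S : Type*} (P : S → PMF S) (μ : PMF S) : ℕ → PMF S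
  | 0 => μ
  | (t + 1) => (stepDist P μ t).bind P

/-- Discounted value `J(μ, P) = ∑'_t γ^t ∑_s μ_t^P(s) · r(s)`. -/
noncomputable def discValue {S : Type*} [Fintype S] (γ : ℝ) (r : S → ℝ)
    (μ : PMF S) (P : S → PMF S) : ℝ :=
  ∑' t : ℕ, γ ^ t * ∑ s, (stepDist P μ t s).toReal * r s

/-- Total variation distance `TV(p, q) = (1/2) ∑_s |p s − q s|` on a finite type. -/
noncomputable def tvDist {S : Type*} [Fintype S] (p q : PMF S) : ℝ :=
  (1 / 2) * ∑ s, |(p s).toReal - (q s).toReal|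

/-!
Run the two chains side by side. One step of a common kernel does not increase total variation,
and replacing `P` by `P'` in one step costs at most `α`, so `TV(μ_t^P, μ_t^{P'}) ≤ t α`. A reward
bounded by `R_max` has expectations differing by at most `2 R_max` times the total variation, so
the `t`-th terms of the two values differ by at most `2 R_max α t γ^t`, and
`∑ₜ t γ^t = γ / (1 - γ)²`.
-/

open Finset

section

variable {S : Type*} [Fintype S]

namespace PMF

theorem sum_toReal_eq_one (p : PMF S) : ∑ s, (p s).toReal = 1 := by
  rw [← ENNReal.toReal_sum fun a _ => p.apply_ne_top a, ← tsum_fintype (L := .unconditional _),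
    p.tsum_coe, ENNReal.toReal_one]

theorem toReal_bind_apply (p : PMF S) (P : S → PMF S) (s : S) :
    (p.bind P s).toReal = ∑ a, (p a).toReal * (P a s).toReal := by
  rw [bind_apply, tsum_fintype, ENNReal.toReal_sum fun a _ =>
    ENNReal.mul_ne_top (p.apply_ne_top a) ((P a).apply_ne_top s)]
  simp only [ENNReal.toReal_mul]

theorem abs_sum_toReal_mul_le (p : PMF S) {r : S → ℝ} {R : ℝ} (hr : ∀ s, |r s| ≤ R) :
    |∑ s, (p s).toReal * r s| ≤ R :=
  calc |∑ s, (p s).toReal * r s|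
      ≤ ∑ s, (p s).toReal * R := by
        refine (abs_sum_le_sum_abs _ _).trans (sum_le_sum fun s _ => ?_)
        rw [abs_mul, ENNReal.abs_toReal]
        exact mul_le_mul_of_nonneg_left (hr s) ENNReal.toReal_nonneg
    _ = R := by rw [← sum_mul, p.sum_toReal_eq_one, one_mul]

end PMF

theorem tvDist_triangle (p q q' : PMF S) : tvDist p q' ≤ tvDist p q + tvDist q q' := by
  unfold tvDist
  rw [← mul_add, ← sum_add_distrib]
  gcongr with s
  exact abs_sub_le _ _ _

theorem tvDist_bind_le_tvDist (p q : PMF S) (P : S → PMF S) :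
    tvDist (p.bind P) (q.bind P) ≤ tvDist p q := by
  unfold tvDist
  gcongr 1 / 2 * ?_
  calc ∑ s, |(p.bind P s).toReal - (q.bind P s).toReal|
      = ∑ s, |∑ a, ((p a).toReal - (q a).toReal) * (P a s).toReal| := by
        simp only [PMF.toReal_bind_apply, sub_mul, sum_sub_distrib]
    _ ≤ ∑ s, ∑ a, |(p a).toReal - (q a).toReal| * (P a s).toReal := by
        gcongr with s
        refine (abs_sum_le_sum_abs _ _).trans_eq (sum_congr rfl fun a _ => ?_)
        rw [abs_mul, ENNReal.abs_toReal]
    _ = ∑ a, |(p a).toReal - (q a).toReal| := by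
        rw [sum_comm]
        simp only [← mul_sum, PMF.sum_toReal_eq_one, mul_one]

theorem tvDist_bind_le_of_le (p : PMF S) {P P' : S → PMF S} {α : ℝ}
    (hP : ∀ s, tvDist (P s) (P' s) ≤ α) : tvDist (p.bind P) (p.bind P') ≤ α :=
  calc tvDist (p.bind P) (p.bind P')
      = (1 / 2) * ∑ s, |∑ a, (p a).toReal * ((P a s).toReal - (P' a s).toReal)| := by
        simp only [tvDist, PMF.toReal_bind_apply, mul_sub, sum_sub_distrib]
    _ ≤ (1 / 2) * ∑ s, ∑ a, (p a).toReal * |(P a s).toReal - (P' a s).toReal| := by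
        gcongr with s
        refine (abs_sum_le_sum_abs _ _).trans_eq (sum_congr rfl fun a _ => ?_)
        rw [abs_mul, ENNReal.abs_toReal]
    _ = ∑ a, (p a).toReal * tvDist (P a) (P' a) := by
        rw [sum_comm, mul_sum]
        refine sum_congr rfl fun a _ => ?_
        rw [tvDist, ← mul_sum]
        ring
    _ ≤ ∑ a, (p a).toReal * α := by gcongr with a; exact hP a
    _ = α := by rw [← sum_mul, p.sum_toReal_eq_one, one_mul]

theorem tvDist_stepDist_le (μ : PMF S) {P P' : S → PMF S} {α : ℝ}
    (hP : ∀ s, tvDist (P s) (P' s) ≤ α) (t : ℕ) :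
    tvDist (stepDist P μ t) (stepDist P' μ t) ≤ t * α := by
  induction t with
  | zero => simp [tvDist, stepDist]
  | succ t ih =>
    calc tvDist (stepDist P μ (t + 1)) (stepDist P' μ (t + 1))
        ≤ tvDist (stepDist P μ t) (stepDist P' μ t) + α :=
          (tvDist_triangle _ ((stepDist P' μ t).bind P) _).trans
            (add_le_add (tvDist_bind_le_tvDist _ _ P) (tvDist_bind_le_of_le _ hP))
      _ ≤ (t + 1 : ℕ) * α := by push_cast; linarith

theorem abs_sum_toReal_mul_sub_le (p q : PMF S) {r : S → ℝ} {R : ℝ} (hr : ∀ s, |r s| ≤ R) :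
    |∑ s, (p s).toReal * r s - ∑ s, (q s).toReal * r s| ≤ 2 * R * tvDist p q :=
  calc |∑ s, (p s).toReal * r s - ∑ s, (q s).toReal * r s|
      ≤ ∑ s, |(p s).toReal - (q s).toReal| * R := by
        rw [← sum_sub_distrib]
        refine (abs_sum_le_sum_abs _ _).trans (sum_le_sum fun s _ => ?_)
        rw [← sub_mul, abs_mul]
        exact mul_le_mul_of_nonneg_left (hr s) (abs_nonneg _)
    _ = 2 * R * tvDist p q := by rw [tvDist, ← sum_mul]; ring

theorem summable_pow_mul_sum_toReal_mul {γ : ℝ} (hγ0 : 0 ≤ γ) (hγ1 : γ < 1) (ν : ℕ → PMF S)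
    {r : S → ℝ} {R : ℝ} (hr : ∀ s, |r s| ≤ R) :
    Summable fun t => γ ^ t * ∑ s, (ν t s).toReal * r s := by
  refine ((summable_geometric_of_lt_one hγ0 hγ1).mul_right R).of_norm_bounded fun t => ?_
  rw [Real.norm_eq_abs, abs_mul, abs_of_nonneg (pow_nonneg hγ0 t)]
  exact mul_le_mul_of_nonneg_left ((ν t).abs_sum_toReal_mul_le hr) (pow_nonneg hγ0 t)

end

theorem uniform_simulation_lemma_general {S : Type*} [Fintype S]
    (γ : ℝ) (hγ0 : 0 ≤ γ) (hγ1 : γ < 1)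
    (Rmax : ℝ) (hR : 0 ≤ Rmax) (r : S → ℝ) (hr : ∀ s, |r s| ≤ Rmax)
    (μ : PMF S) (P P' : S → PMF S) (α : ℝ)
    (hTV : ∀ s, tvDist (P s) (P' s) ≤ α) :
    |discValue γ r μ P - discValue γ r μ P'| ≤ 2 * γ * Rmax * α / (1 - γ) ^ 2 := by
  have hγ : ‖γ‖ < 1 := by rwa [Real.norm_of_nonneg hγ0]
  have hterm (t : ℕ) :
      ‖γ ^ t * ∑ s, (stepDist P μ t s).toReal * r s
        - γ ^ t * ∑ s, (stepDist P' μ t s).toReal * r s‖ ≤ 2 * Rmax * α * (t * γ ^ t) := by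
    rw [Real.norm_eq_abs, ← mul_sub, abs_mul, abs_of_nonneg (pow_nonneg hγ0 t)]
    calc γ ^ t * |∑ s, (stepDist P μ t s).toReal * r s
            - ∑ s, (stepDist P' μ t s).toReal * r s|
        ≤ γ ^ t * (2 * Rmax * (t * α)) := by
          gcongr
          exact (abs_sum_toReal_mul_sub_le _ _ hr).trans
            (by gcongr; exact tvDist_stepDist_le μ hTV t)
      _ = 2 * Rmax * α * (t * γ ^ t) := by ring
  have hsum := (hasSum_coe_mul_geometric_of_norm_lt_one hγ).mul_left (2 * Rmax * α)
  calc |discValue γ r μ P - discValue γ r μ P'|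
      ≤ 2 * Rmax * α * (γ / (1 - γ) ^ 2) := by
        rw [discValue, discValue, ← Summable.tsum_sub
          (summable_pow_mul_sum_toReal_mul hγ0 hγ1 _ hr)
          (summable_pow_mul_sum_toReal_mul hγ0 hγ1 _ hr), ← Real.norm_eq_abs]
        exact tsum_of_norm_bounded hsum hterm
    _ = 2 * γ * Rmax * α / (1 - γ) ^ 2 := by ring

/-- Uniform simulation lemma: if the two kernels are `α`-close in total variation at every
state, then the discounted values differ by at most `2·γ·R_max·α / (1−γ)²`. -/
theorem uniform_simulation_lemma {S : Type*} [Fintype S] [Nonempty S]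
    (γ : ℝ) (hγ0 : 0 ≤ γ) (hγ1 : γ < 1)
    (Rmax : ℝ) (hR : 0 ≤ Rmax) (r : S → ℝ) (hr : ∀ s, |r s| ≤ Rmax)
    (μ : PMF S) (P P' : S → PMF S) (α : ℝ)
    (hTV : ∀ s, tvDist (P s) (P' s) ≤ α) :
    |discValue γ r μ P - discValue γ r μ P'| ≤ 2 * γ * Rmax * α / (1 - γ) ^ 2 :=
  uniform_simulation_lemma_general γ hγ0 hγ1 Rmax hR r hr μ P P' α hTV
end

section
/- Let S be a finite nonempty type, γ ∈ [0,1), r : S → ℝ, μ : PMF S, and let P, P' : S → PMF S be two transition kernels. Let V'(s) denote the value of P' started from the point mass at s, i.e., V'(s) = J(δ_s, P'). Then J(μ, P) − J(μ, P') = (γ/(1−γ)) · ∑_s ρ_{μ,P}(s) · ( ∑_{s'} (P s)(s') · V'(s') − ∑_{s'} (P' s)(s') · V'(s') ). -/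
open scoped ENNReal

/-- Discounted visitation distribution `ρ_{μ,P}(s) = (1−γ) ∑'_t γ^t μ_t^P(s)`. -/
noncomputable def visitDist {S : Type*} (γ : ℝ) (μ : PMF S) (P : S → PMF S) (s : S) : ℝ :=
  (1 - γ) * ∑' t : ℕ, γ ^ t * (stepDist P μ t s).toReal

/-!
Write `V' s = J(δ_s, P')` and `D s = ⟨P s, V'⟩ - ⟨P' s, V'⟩`. Both `ν ↦ J(ν, P) - J(ν, P')` and
`ν ↦ γ J_D(ν, P)` (the value of `P` for the reward `D`) are bounded and satisfy the recursion
`f ν = γ ⟨ν, D⟩ + γ f (ν.bind P)`: for the first, expand both values by one Bellman step and use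
that `J(·, P')` is linear in the initial distribution. Their difference `e` satisfies
`e ν = γ e (ν.bind P)`, so `|e| ≤ γ ^ n B` for every `n` and `e = 0`. Finally
`(1 - γ) J_D(μ, P) = ∑ s, ρ_{μ,P} s * D s`.
-/

namespace PMF

variable {S : Type*} [Fintype S]

noncomputable def expect (ν : PMF S) (f : S → ℝ) : ℝ := ∑ s, (ν s).toReal * f s

theorem sum_toReal (ν : PMF S) : ∑ s, (ν s).toReal = 1 := by
  have h := ν.tsum_coe
  rw [tsum_fintype] at h
  rw [← ENNReal.toReal_sum fun s _ => ν.apply_ne_top s, h, ENNReal.toReal_one]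

theorem toReal_apply_le_one (ν : PMF S) (s : S) : (ν s).toReal ≤ 1 :=
  ν.sum_toReal ▸ Finset.single_le_sum (fun _ _ => ENNReal.toReal_nonneg) (Finset.mem_univ s)

theorem expect_bind (ν : PMF S) (Q : S → PMF S) (f : S → ℝ) :
    (ν.bind Q).expect f = ν.expect fun s => (Q s).expect f := by
  have hbind (s' : S) : ((ν.bind Q) s').toReal = ∑ s, (ν s).toReal * (Q s s').toReal := by
    rw [bind_apply, tsum_fintype, ENNReal.toReal_sum fun s _ =>
      ENNReal.mul_ne_top (ν.apply_ne_top s) ((Q s).apply_ne_top s')]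
    simp only [ENNReal.toReal_mul]
  simp only [expect, hbind, Finset.sum_mul, Finset.mul_sum, mul_assoc]
  exact Finset.sum_comm

theorem expect_sub (ν : PMF S) (f g : S → ℝ) :
    (ν.expect fun s => f s - g s) = ν.expect f - ν.expect g := by
  simp only [expect, mul_sub, Finset.sum_sub_distrib]

theorem expect_const_mul (ν : PMF S) (c : ℝ) (f : S → ℝ) :
    (ν.expect fun s => c * f s) = c * ν.expect f := by
  simp only [expect, Finset.mul_sum, mul_left_comm]

theorem expect_tsum (ν : PMF S) {f : ℕ → S → ℝ} (hf : ∀ s, Summable fun t => f t s) :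
    (ν.expect fun s => ∑' t, f t s) = ∑' t, ν.expect (f t) := by
  simp only [expect, ← tsum_mul_left]
  exact (Summable.tsum_finsetSum fun s _ => (hf s).mul_left _).symm

theorem abs_expect_le (ν : PMF S) (f : S → ℝ) : |ν.expect f| ≤ ‖f‖ :=
  calc |ν.expect f| ≤ ∑ s, (ν s).toReal * ‖f‖ := by
        refine (Finset.abs_sum_le_sum_abs _ _).trans (Finset.sum_le_sum fun s _ => ?_)
        rw [abs_mul, ENNReal.abs_toReal]
        exact mul_le_mul_of_nonneg_left (norm_le_pi_norm f s) ENNReal.toReal_nonneg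
    _ = ‖f‖ := by rw [← Finset.sum_mul, ν.sum_toReal, one_mul]

end PMF

section StepDist

variable {S : Type*} (P : S → PMF S)

theorem stepDist_succ_eq_stepDist_bind (μ : PMF S) :
    ∀ t, stepDist P μ (t + 1) = stepDist P (μ.bind P) t
  | 0 => rfl
  | t + 1 => congrArg (·.bind P) (stepDist_succ_eq_stepDist_bind μ t)

theorem stepDist_eq_bind_pure (μ : PMF S) (t : ℕ) :
    stepDist P μ t = μ.bind fun s => stepDist P (PMF.pure s) t := by
  induction t with
  | zero => exact μ.bind_pure.symm
  | succ t ih => simp only [stepDist, ih, PMF.bind_bind]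

end StepDist

section Geometric

variable {γ C : ℝ} (hγ0 : 0 ≤ γ) (hγ1 : γ < 1) {f : ℕ → ℝ} (hf : ∀ t, |f t| ≤ C)

include hγ0 hf in
theorem norm_pow_mul_le (t : ℕ) : ‖γ ^ t * f t‖ ≤ γ ^ t * C := by
  rw [Real.norm_eq_abs, abs_mul, abs_of_nonneg (pow_nonneg hγ0 t)]
  exact mul_le_mul_of_nonneg_left (hf t) (pow_nonneg hγ0 t)

include hγ0 hγ1 hf in
theorem summable_pow_mul_of_abs_le : Summable fun t => γ ^ t * f t :=
  ((summable_geometric_of_lt_one hγ0 hγ1).mul_right C).of_norm_bounded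
    (norm_pow_mul_le hγ0 hf)

include hγ0 hγ1 hf in
theorem abs_tsum_pow_mul_le : |∑' t, γ ^ t * f t| ≤ (1 - γ)⁻¹ * C :=
  tsum_of_norm_bounded ((hasSum_geometric_of_lt_one hγ0 hγ1).mul_right C)
    (norm_pow_mul_le hγ0 hf)

end Geometric

theorem eq_zero_of_forall_eq_mul_comp {X : Type*} {T : X → X} {e : X → ℝ} {γ B : ℝ}
    (hγ0 : 0 ≤ γ) (hγ1 : γ < 1) (hB : ∀ x, |e x| ≤ B) (he : ∀ x, e x = γ * e (T x))
    (x : X) : e x = 0 := by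
  have hpow (n : ℕ) : ∀ x, |e x| ≤ γ ^ n * B := by
    induction n with
    | zero => simpa using hB
    | succ n ih =>
      intro x
      rw [he, abs_mul, abs_of_nonneg hγ0, pow_succ', mul_assoc]
      exact mul_le_mul_of_nonneg_left (ih (T x)) hγ0
  have hlim : Filter.Tendsto (fun n : ℕ => γ ^ n * B) Filter.atTop (nhds 0) := by
    simpa using (tendsto_pow_atTop_nhds_zero_of_lt_one hγ0 hγ1).mul_const B
  exact abs_eq_zero.mp (le_antisymm (ge_of_tendsto' hlim fun n => hpow n x) (abs_nonneg _))

section DiscValue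

variable {S : Type*} [Fintype S] {γ : ℝ} (hγ0 : 0 ≤ γ) (hγ1 : γ < 1)
  (r : S → ℝ) (μ : PMF S) (P : S → PMF S)

theorem discValue_eq_tsum_expect :
    discValue γ r μ P = ∑' t, γ ^ t * (stepDist P μ t).expect r := rfl

include hγ0 hγ1 in
theorem summable_pow_mul_expect_stepDist :
    Summable fun t => γ ^ t * (stepDist P μ t).expect r :=
  summable_pow_mul_of_abs_le hγ0 hγ1 fun t => (stepDist P μ t).abs_expect_le r

include hγ0 hγ1 in
theorem abs_discValue_le : |discValue γ r μ P| ≤ (1 - γ)⁻¹ * ‖r‖ :=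
  abs_tsum_pow_mul_le hγ0 hγ1 fun t => (stepDist P μ t).abs_expect_le r

include hγ0 hγ1 in
theorem discValue_eq_expect_add :
    discValue γ r μ P = μ.expect r + γ * discValue γ r (μ.bind P) P := by
  rw [discValue_eq_tsum_expect,
    (summable_pow_mul_expect_stepDist hγ0 hγ1 r μ P).tsum_eq_zero_add, discValue_eq_tsum_expect,
    ← tsum_mul_left]
  simp only [stepDist_succ_eq_stepDist_bind, pow_succ', mul_assoc, pow_zero, one_mul]
  rfl

include hγ0 hγ1 in
theorem discValue_eq_expect_discValue_pure :
    discValue γ r μ P = μ.expect fun s => discValue γ r (PMF.pure s) P := by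
  simp only [discValue_eq_tsum_expect]
  rw [PMF.expect_tsum μ fun s => summable_pow_mul_expect_stepDist hγ0 hγ1 r _ P]
  refine tsum_congr fun t => ?_
  rw [stepDist_eq_bind_pure, PMF.expect_bind, PMF.expect_const_mul]

include hγ0 hγ1 in
theorem one_sub_mul_discValue :
    (1 - γ) * discValue γ r μ P = ∑ s, visitDist γ μ P s * r s := by
  simp only [visitDist, mul_assoc, ← Finset.mul_sum, ← tsum_mul_right]
  congr 1
  rw [← Summable.tsum_finsetSum fun s _ => ?_]
  · exact tsum_congr fun t => by simp only [Finset.mul_sum]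
  · refine summable_pow_mul_of_abs_le hγ0 hγ1 (C := |r s|) fun t => ?_
    rw [abs_mul, ENNReal.abs_toReal]
    exact mul_le_of_le_one_left (abs_nonneg _) ((stepDist P μ t).toReal_apply_le_one s)

end DiscValue

section SimulationLemma

variable {S : Type*} [Fintype S] {γ : ℝ} (hγ0 : 0 ≤ γ) (hγ1 : γ < 1)
  (r : S → ℝ) (μ : PMF S) (P P' : S → PMF S)

include hγ0 hγ1 in
theorem discValue_bind (Q : S → PMF S) :
    discValue γ r (μ.bind Q) P =
      μ.expect fun s => (Q s).expect fun s' => discValue γ r (PMF.pure s') P := by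
  rw [discValue_eq_expect_discValue_pure hγ0 hγ1, PMF.expect_bind]

include hγ0 hγ1 in
theorem discValue_sub_discValue :
    discValue γ r μ P - discValue γ r μ P' =
      γ * discValue γ (fun s => (P s).expect (fun s' => discValue γ r (PMF.pure s') P') -
        (P' s).expect (fun s' => discValue γ r (PMF.pure s') P')) μ P := by
  set D : S → ℝ := fun s => (P s).expect (fun s' => discValue γ r (PMF.pure s') P') -
    (P' s).expect (fun s' => discValue γ r (PMF.pure s') P')
  set e : PMF S → ℝ := fun ν => discValue γ r ν P - discValue γ r ν P' - γ * discValue γ D ν P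
  have hD (ν : PMF S) :
      ν.expect D = discValue γ r (ν.bind P) P' - discValue γ r (ν.bind P') P' := by
    rw [PMF.expect_sub, discValue_bind hγ0 hγ1, discValue_bind hγ0 hγ1]
  have he (ν : PMF S) : e ν = γ * e (ν.bind P) := by
    simp only [e]
    rw [discValue_eq_expect_add hγ0 hγ1 r ν P, discValue_eq_expect_add hγ0 hγ1 r ν P',
      discValue_eq_expect_add hγ0 hγ1 D ν P, hD]
    ring
  have hB (ν : PMF S) : |e ν| ≤ 2 * ((1 - γ)⁻¹ * ‖r‖) + γ * ((1 - γ)⁻¹ * ‖D‖) :=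
    calc |e ν| ≤ (|discValue γ r ν P| + |discValue γ r ν P'|) + γ * |discValue γ D ν P| := by
          refine (abs_sub _ _).trans ?_
          rw [abs_mul, abs_of_nonneg hγ0]
          gcongr
          exact abs_sub _ _
      _ ≤ _ := by
          have := abs_discValue_le hγ0 hγ1 r ν P
          have := abs_discValue_le hγ0 hγ1 r ν P'
          have := abs_discValue_le hγ0 hγ1 D ν P
          gcongr
          linarith
  exact sub_eq_zero.mp (eq_zero_of_forall_eq_mul_comp hγ0 hγ1 hB he μ)

end SimulationLemma

theorem telescoping_identity_general {S : Type*} [Fintype S]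
    (γ : ℝ) (hγ0 : 0 ≤ γ) (hγ1 : γ < 1)
    (r : S → ℝ) (μ : PMF S) (P P' : S → PMF S) :
    discValue γ r μ P - discValue γ r μ P' =
      (γ / (1 - γ)) * ∑ s, visitDist γ μ P s *
        ((∑ s', (P s s').toReal * discValue γ r (PMF.pure s') P') -
          (∑ s', (P' s s').toReal * discValue γ r (PMF.pure s') P')) := by
  have h1γ : 1 - γ ≠ 0 := by linarith
  rw [discValue_sub_discValue hγ0 hγ1, ← one_sub_mul_discValue hγ0 hγ1, ← mul_assoc,
    div_mul_cancel₀ γ h1γ]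
  rfl

/-- Exact telescoping identity underlying the simulation lemma: with
`V'(s) = J(δ_s, P')`, we have
`J(μ, P) − J(μ, P') = (γ/(1−γ)) · ∑_s ρ_{μ,P}(s) · (∑_{s'} (P s)(s')·V'(s') − ∑_{s'} (P' s)(s')·V'(s'))`. -/
theorem telescoping_identity {S : Type*} [Fintype S] [Nonempty S]
    (γ : ℝ) (hγ0 : 0 ≤ γ) (hγ1 : γ < 1)
    (r : S → ℝ) (μ : PMF S) (P P' : S → PMF S) :
    discValue γ r μ P - discValue γ r μ P' =
      (γ / (1 - γ)) * ∑ s, visitDist γ μ P s *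
        ((∑ s', (P s s').toReal * discValue γ r (PMF.pure s') P') -
          (∑ s', (P' s s').toReal * discValue γ r (PMF.pure s') P')) :=
  telescoping_identity_general γ hγ0 hγ1 r μ P P'
end
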